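/- Let H₀, H₁, H₂ be complex Hilbert spaces and let ∂̄₀ : Dom(∂̄₀) ⊆ H₀ → H₁, ∂̄₁ : Dom(∂̄₁) ⊆ H₁ → H₂ be densely defined closed operators with ∂̄₁ ∘ ∂̄₀ = 0 on Dom(∂̄₀) with range in Dom(∂̄₁). Suppose the estimate ‖u‖ ≤ C(‖∂̄₁ u‖ + ‖∂̄₀* u‖) holds for all u ∈ Dom(∂̄₁) ∩ Dom(∂̄₀*). Then for every f ∈ Ker(∂̄₁) there exists g ∈ Dom(∂̄₀) with ∂̄₀ g = f and ‖g‖ ≤ C‖f‖. -/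

import Mathlib

/-!
On the closed subspace `K = ker ∂̄₁`, which contains the range of `∂̄₀`, the estimate reads
`‖v‖ ≤ C ‖∂̄₀* v‖`. Since `Kᗮ ⊆ ker ∂̄₀*`, projecting `u ∈ Dom ∂̄₀*` onto `K` changes neither
`∂̄₀* u` nor `⟪f, u⟫` for `f ∈ K`; hence `‖⟪f, u⟫‖ ≤ C ‖f‖ ‖∂̄₀* u‖`. So `∂̄₀* u ↦ ⟪f, u⟫` is a
functional of norm `≤ C ‖f‖` on the range of `∂̄₀*`; by Hahn–Banach and Riesz it is `⟪g, ·⟫` with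
`‖g‖ ≤ C ‖f‖`, and `⟪g, ∂̄₀* u⟫ = ⟪f, u⟫` for all `u` says that `(g, f)` lies in the graph of
`∂̄₀** = ∂̄₀`.
-/

open scoped InnerProductSpace LinearPMap

section Ker

variable {R E F : Type*} [CommRing R] [AddCommGroup E] [Module R E] [AddCommGroup F] [Module R F]

def LinearPMap.ker (T : E →ₗ.[R] F) : Submodule R E :=
  T.graph.comap (LinearMap.inl R E F)

theorem LinearPMap.mem_ker_iff {T : E →ₗ.[R] F} {x : E} : x ∈ T.ker ↔ (x, 0) ∈ T.graph :=
  Iff.rfl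

theorem LinearPMap.isClosed_ker [TopologicalSpace E] [TopologicalSpace F] {T : E →ₗ.[R] F}
    (hT : T.IsClosed) : _root_.IsClosed (T.ker : Set E) :=
  hT.preimage (continuous_id.prodMk continuous_const)

end Ker

theorem exists_strongDual_comp_eq_of_norm_le {𝕜 V W : Type*} [RCLike 𝕜] [AddCommGroup V]
    [Module 𝕜 V] [NormedAddCommGroup W] [NormedSpace 𝕜 W] (φ : V →ₗ[𝕜] W) (ψ : V →ₗ[𝕜] 𝕜)
    {M : ℝ} (hM : 0 ≤ M) (h : ∀ v, ‖ψ v‖ ≤ M * ‖φ v‖) :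
    ∃ L : StrongDual 𝕜 W, ‖L‖ ≤ M ∧ ∀ v, L (φ v) = ψ v := by
  have hker : LinearMap.ker φ ≤ LinearMap.ker ψ := fun v hv ↦ by
    simpa [LinearMap.mem_ker.mp hv] using h v
  let ℓ : LinearMap.range φ →ₗ[𝕜] 𝕜 :=
    (LinearMap.ker φ).liftQ ψ hker ∘ₗ φ.quotKerEquivRange.symm.toLinearMap
  have hℓ (v : V) : ℓ ⟨φ v, φ.mem_range_self v⟩ = ψ v := by
    simp [ℓ, LinearMap.quotKerEquivRange_symm_apply_image]
  have hℓM : ∀ w, ‖ℓ w‖ ≤ M * ‖w‖ := by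
    rintro ⟨_, v, rfl⟩
    simpa [hℓ] using h v
  obtain ⟨L, hLℓ, hLnorm⟩ := exists_extension_norm_eq _ (ℓ.mkContinuous M hℓM)
  exact ⟨L, hLnorm ▸ ℓ.mkContinuous_norm_le hM hℓM,
    fun v ↦ (hLℓ ⟨φ v, φ.mem_range_self v⟩).trans (hℓ v)⟩

section Adjoint

variable {𝕜 E F : Type*} [RCLike 𝕜]
  [NormedAddCommGroup E] [InnerProductSpace 𝕜 E] [NormedAddCommGroup F] [InnerProductSpace 𝕜 F]
  {T : E →ₗ.[𝕜] F}

theorem LinearPMap.mem_ker_adjoint_of_forall_inner_eq_zero [CompleteSpace E]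
    (hT : Dense (T.domain : Set E)) {w : F} (hw : ∀ x : T.domain, ⟪T x, w⟫_𝕜 = 0) :
    w ∈ T†.ker := by
  rw [mem_ker_iff, adjoint_graph_eq_graph_adjoint hT, Submodule.mem_adjoint_iff]
  intro a b hab
  obtain ⟨x, rfl, rfl⟩ := (mem_graph_iff T).mp hab
  simp [hw]

/-- The inclusion `T†† ≤ T` for closed `T`, stated without forming `T††`. -/
theorem LinearPMap.mem_graph_of_forall_inner_adjoint [CompleteSpace E] [CompleteSpace F]
    (hT : Dense (T.domain : Set E)) (hTc : T.IsClosed) {g : E} {f : F}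
    (h : ∀ u : T†.domain, ⟪g, T† u⟫_𝕜 = ⟪f, (u : F)⟫_𝕜) : (g, f) ∈ T.graph := by
  let e := WithLp.prodContinuousLinearEquiv 2 𝕜 E F
  let G : Submodule 𝕜 (WithLp 2 (E × F)) := T.graph.comap (e : WithLp 2 (E × F) →ₗ[𝕜] E × F)
  have : CompleteSpace G := (hTc.preimage e.continuous).completeSpace_coe
  suffices e.symm (g, f) ∈ Gᗮᗮ by rwa [G.orthogonal_orthogonal] at this
  rw [Submodule.mem_orthogonal]
  intro w hw
  have hwT : (w.snd, -w.fst) ∈ T†.graph := by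
    rw [adjoint_graph_eq_graph_adjoint hT, Submodule.mem_adjoint_iff]
    intro a b hab
    have := (Submodule.mem_orthogonal G w).mp hw (e.symm (a, b)) hab
    simp only [WithLp.prod_inner_apply, WithLp.prodContinuousLinearEquiv_symm_apply,
      WithLp.ofLp_fst, WithLp.ofLp_snd, inner_neg_right, sub_neg_eq_add, e] at this ⊢
    linear_combination this
  have hdom := mem_domain_of_mem_graph hwT
  have hTw := (image_iff hdom).mpr hwT
  have := congrArg (starRingEnd 𝕜) (h ⟨_, hdom⟩)
  rw [← hTw] at this
  simp only [WithLp.prod_inner_apply, WithLp.prodContinuousLinearEquiv_symm_apply,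
    WithLp.ofLp_fst, WithLp.ofLp_snd, inner_neg_right, _root_.map_neg, inner_conj_symm, e] at this ⊢
  linear_combination -this

theorem LinearPMap.exists_mem_domain_apply_eq_of_norm_inner_le [CompleteSpace E] [CompleteSpace F]
    (hT : Dense (T.domain : Set E)) (hTc : T.IsClosed) {f : F} {M : ℝ} (hM : 0 ≤ M)
    (h : ∀ u : T†.domain, ‖⟪f, (u : F)⟫_𝕜‖ ≤ M * ‖T† u‖) :
    ∃ (g : E) (hg : g ∈ T.domain), T ⟨g, hg⟩ = f ∧ ‖g‖ ≤ M := by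
  obtain ⟨L, hLM, hL⟩ := exists_strongDual_comp_eq_of_norm_le T†.toFun
    ((innerₛₗ 𝕜 f).comp T†.domain.subtype) hM h
  set g := (InnerProductSpace.toDual 𝕜 E).symm L
  have hgf : (g, f) ∈ T.graph := mem_graph_of_forall_inner_adjoint hT hTc fun u ↦ by
    simpa [g, InnerProductSpace.toDual_symm_apply] using hL u
  have hg := mem_domain_of_mem_graph hgf
  refine ⟨g, hg, ((image_iff hg).mpr hgf).symm, ?_⟩
  simpa [g] using hLM

theorem LinearPMap.norm_inner_le_of_norm_le_adjoint [CompleteSpace E]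
    (hT : Dense (T.domain : Set E)) {K : Submodule 𝕜 F} [K.HasOrthogonalProjection]
    (hTK : ∀ x : T.domain, T x ∈ K) {C : ℝ}
    (hK : ∀ v : T†.domain, (v : F) ∈ K → ‖(v : F)‖ ≤ C * ‖T† v‖) {f : F} (hf : f ∈ K)
    (u : T†.domain) : ‖⟪f, (u : F)⟫_𝕜‖ ≤ C * ‖f‖ * ‖T† u‖ := by
  set v := K.starProjection u
  have hw : (u : F) - v ∈ T†.ker := mem_ker_adjoint_of_forall_inner_eq_zero hT fun x ↦
    K.inner_right_of_mem_orthogonal (hTK x) (K.sub_starProjection_mem_orthogonal _)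
  have hv : (v, T† u) ∈ T†.graph := by
    simpa using sub_mem (T†.mem_graph u) hw
  have hvdom := mem_domain_of_mem_graph hv
  have hTv : T† ⟨v, hvdom⟩ = T† u := ((image_iff hvdom).mpr hv).symm
  have hfu : ⟪f, (u : F)⟫_𝕜 = ⟪f, v⟫_𝕜 := by
    rw [← sub_eq_zero, ← inner_sub_right]
    exact K.inner_right_of_mem_orthogonal hf (K.sub_starProjection_mem_orthogonal _)
  calc ‖⟪f, (u : F)⟫_𝕜‖ = ‖⟪f, v⟫_𝕜‖ := by rw [hfu]
    _ ≤ ‖f‖ * ‖v‖ := norm_inner_le_norm f v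
    _ ≤ ‖f‖ * (C * ‖T† u‖) := by
      gcongr
      simpa [hTv] using hK ⟨v, hvdom⟩ (K.starProjection_apply_mem _)
    _ = C * ‖f‖ * ‖T† u‖ := by ring

end Adjoint

theorem stmt_5_general {H₀ H₁ H₂ : Type*}
    [NormedAddCommGroup H₀] [InnerProductSpace ℂ H₀] [CompleteSpace H₀]
    [NormedAddCommGroup H₁] [InnerProductSpace ℂ H₁] [CompleteSpace H₁]
    [NormedAddCommGroup H₂] [InnerProductSpace ℂ H₂] [CompleteSpace H₂]
    (D₀ : H₀ →ₗ.[ℂ] H₁) (D₁ : H₁ →ₗ.[ℂ] H₂)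
    (hdense₀ : Dense (D₀.domain : Set H₀))
    (hclosed₀ : IsClosed (D₀.graph : Set (H₀ × H₁)))
    (hclosed₁ : IsClosed (D₁.graph : Set (H₁ × H₂)))
    (hrange : ∀ x : D₀.domain, D₀ x ∈ D₁.domain)
    (hcomp : ∀ x : D₀.domain, D₁ ⟨D₀ x, hrange x⟩ = 0)
    (C : ℝ) (hC : 0 < C)
    (hest : ∀ (u : H₁) (h1 : u ∈ D₁.domain) (h0 : u ∈ D₀.adjoint.domain),
      ‖u‖ ≤ C * (‖D₁ ⟨u, h1⟩‖ + ‖D₀.adjoint ⟨u, h0⟩‖)) :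
    ∀ (f : H₁) (hf : f ∈ D₁.domain), D₁ ⟨f, hf⟩ = 0 →
      ∃ (g : H₀) (hg : g ∈ D₀.domain), D₀ ⟨g, hg⟩ = f ∧ ‖g‖ ≤ C * ‖f‖ := by
  intro f hf hf0
  have : CompleteSpace D₁.ker := (D₁.isClosed_ker hclosed₁).completeSpace_coe
  have hD₀ (x : D₀.domain) : D₀ x ∈ D₁.ker := (D₁.image_iff (hrange x)).mp (hcomp x).symm
  have hest_ker (v : D₀†.domain) (hv : (v : H₁) ∈ D₁.ker) : ‖(v : H₁)‖ ≤ C * ‖D₀† v‖ := by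
    have hv₁ := D₁.mem_domain_of_mem_graph hv
    have hD₁v : D₁ ⟨v, hv₁⟩ = 0 := ((D₁.image_iff hv₁).mpr hv).symm
    simpa [hD₁v] using hest v hv₁ v.2
  have hfK : f ∈ D₁.ker := (D₁.image_iff hf).mp hf0.symm
  exact D₀.exists_mem_domain_apply_eq_of_norm_inner_le hdense₀ hclosed₀ (by positivity)
    (D₀.norm_inner_le_of_norm_le_adjoint hdense₀ hD₀ hest_ker hfK)

/-- in a Hilbert complex `H₀ →∂̄₀→ H₁ →∂̄₁→ H₂` with the a priori estimate
`‖u‖ ≤ C(‖∂̄₁u‖ + ‖∂̄₀*u‖)`, every `f ∈ Ker ∂̄₁` admits a solution `∂̄₀ g = f` with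
`‖g‖ ≤ C‖f‖`. -/
theorem stmt_5 {H₀ H₁ H₂ : Type*}
    [NormedAddCommGroup H₀] [InnerProductSpace ℂ H₀] [CompleteSpace H₀]
    [NormedAddCommGroup H₁] [InnerProductSpace ℂ H₁] [CompleteSpace H₁]
    [NormedAddCommGroup H₂] [InnerProductSpace ℂ H₂] [CompleteSpace H₂]
    (D₀ : H₀ →ₗ.[ℂ] H₁) (D₁ : H₁ →ₗ.[ℂ] H₂)
    (hdense₀ : Dense (D₀.domain : Set H₀)) (hdense₁ : Dense (D₁.domain : Set H₁))
    (hclosed₀ : IsClosed (D₀.graph : Set (H₀ × H₁)))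
    (hclosed₁ : IsClosed (D₁.graph : Set (H₁ × H₂)))
    (hrange : ∀ x : D₀.domain, D₀ x ∈ D₁.domain)
    (hcomp : ∀ x : D₀.domain, D₁ ⟨D₀ x, hrange x⟩ = 0)
    (C : ℝ) (hC : 0 < C)
    (hest : ∀ (u : H₁) (h1 : u ∈ D₁.domain) (h0 : u ∈ D₀.adjoint.domain),
      ‖u‖ ≤ C * (‖D₁ ⟨u, h1⟩‖ + ‖D₀.adjoint ⟨u, h0⟩‖)) :
    ∀ (f : H₁) (hf : f ∈ D₁.domain), D₁ ⟨f, hf⟩ = 0 →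
      ∃ (g : H₀) (hg : g ∈ D₀.domain), D₀ ⟨g, hg⟩ = f ∧ ‖g‖ ≤ C * ‖f‖ :=
  stmt_5_general D₀ D₁ hdense₀ hclosed₀ hclosed₁ hrange hcomp C hC hest
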